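/- arXiv:1104.5541 — 2 statements merged into one kernel-verified Lean document; each statement's English description precedes it below -/
import Mathlib

section
/- Let Λ ⊆ ℝⁿ be a full-rank lattice and let k ≥ 1 be an integer. Then a point v ∈ ℝⁿ lies in the interior of B_k(Λ) if and only if ι(v) = k − 1 and μ(v) = 0. -/
/-!
Since the bisector of `0` and `λ ≠ 0` meets the open segment `(0, v)` exactly when `λ` is
strictly closer to `v` than `0` is, `ι(v)` counts those `λ`, and the number of lattice points at
least as close to `v` as `0` is `1 + ι(v) + μ(v)`. Only finitely many lattice points matter near
`v`, so strict inequalities `‖w - λ‖ ≷ ‖w‖` persist for `w` near `v`. If `μ(v) = 0` the count is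
therefore locally constant; if `λ` ties with `0` at `v`, moving `v` slightly along `-λ` loses `λ`
without gaining any point, so arbitrarily close to `v` the count is smaller.
-/

open Set

noncomputable section

/-- Euclidean `n`-space, identified with the tangent plane at the basepoint of a flat torus. -/
abbrev Euc (n : ℕ) := EuclideanSpace ℝ (Fin n)

/-- `Λ ⊆ ℝⁿ` is a full-rank lattice: the image of `ℤⁿ` under some `L ∈ GL(n,ℝ)`,
equivalently the set of integer combinations of a basis of `ℝⁿ`. -/
def IsFullLattice {n : ℕ} (Λ : Set (Euc n)) : Prop :=
  ∃ b : Module.Basis (Fin n) ℝ (Euc n),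
    Λ = {v : Euc n | ∃ m : Fin n → ℤ, v = ∑ i, (m i : ℝ) • b i}

/-- The Brillouin hyperplane `V_λ = {v : ‖v‖ = ‖v - λ‖}` (perpendicular bisector of `0` and `λ`). -/
def Bplane {n : ℕ} (lam : Euc n) : Set (Euc n) :=
  {v : Euc n | ‖v‖ = ‖v - lam‖}

/-- `μ(v) = #{λ ∈ Λ \ {0} : ‖v − λ‖ = ‖v‖}`. -/
def mu {n : ℕ} (Λ : Set (Euc n)) (v : Euc n) : ℕ :=
  Set.ncard {lam : Euc n | lam ∈ Λ ∧ lam ≠ 0 ∧ ‖v - lam‖ = ‖v‖}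

/-- The focal component `σ_i(Λ) = {v : μ(v) = i − 1}`. -/
def focalComp {n : ℕ} (Λ : Set (Euc n)) (i : ℕ) : Set (Euc n) :=
  {v : Euc n | mu Λ v = i - 1}

/-- The Brillouin set `B_k(Λ) = {v : #{λ ∈ Λ : ‖v − λ‖ ≤ ‖v‖} = k}` (here `λ = 0` is counted). -/
def brillouin {n : ℕ} (Λ : Set (Euc n)) (k : ℕ) : Set (Euc n) :=
  {v : Euc n | Set.ncard {lam : Euc n | lam ∈ Λ ∧ ‖v - lam‖ ≤ ‖v‖} = k}

/-- `ι(v) = #{λ ∈ Λ \ {0} : V_λ meets the open segment from 0 to v}`. -/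
def iota {n : ℕ} (Λ : Set (Euc n)) (v : Euc n) : ℕ :=
  Set.ncard {lam : Euc n | lam ∈ Λ ∧ lam ≠ 0 ∧
    ∃ t : ℝ, 0 < t ∧ t < 1 ∧ t • v ∈ Bplane lam}

open RealInnerProductSpace Filter Topology

section InnerProductSpace

variable {E : Type*} [NormedAddCommGroup E] [InnerProductSpace ℝ E]

lemma norm_eq_norm_sub_iff {x y : E} : ‖x‖ = ‖x - y‖ ↔ 2 * ⟪x, y⟫ = ‖y‖ ^ 2 := by
  rw [← sq_eq_sq₀ (norm_nonneg _) (norm_nonneg _), norm_sub_sq_real]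
  constructor <;> intro h <;> linarith

lemma norm_sub_lt_norm_iff {x y : E} : ‖x - y‖ < ‖x‖ ↔ ‖y‖ ^ 2 < 2 * ⟪x, y⟫ := by
  rw [← sq_lt_sq₀ (norm_nonneg _) (norm_nonneg _), norm_sub_sq_real]
  constructor <;> intro h <;> linarith

lemma norm_lt_norm_sub_iff {x y : E} : ‖x‖ < ‖x - y‖ ↔ 2 * ⟪x, y⟫ < ‖y‖ ^ 2 := by
  rw [← sq_lt_sq₀ (norm_nonneg _) (norm_nonneg _), norm_sub_sq_real]
  constructor <;> intro h <;> linarith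

/-- Moving from `v` in the direction `-y` breaks the tie between `0` and `y`. -/
lemma frequently_norm_lt_norm_sub {v y : E} (hy : y ≠ 0) (htie : ‖v - y‖ = ‖v‖) :
    ∃ᶠ w in 𝓝 v, ‖w‖ < ‖w - y‖ := by
  have hv : 2 * ⟪v, y⟫ = ‖y‖ ^ 2 := norm_eq_norm_sub_iff.mp htie.symm
  have hy2 : 0 < ‖y‖ ^ 2 := by positivity
  have hpath : Tendsto (fun s : ℝ => v - s • y) (𝓝[>] 0) (𝓝 v) :=
    ((continuous_const.sub (continuous_id.smul continuous_const)).tendsto' 0 v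
      (by simp)).mono_left nhdsWithin_le_nhds
  refine hpath.frequently (Eventually.frequently ?_)
  filter_upwards [self_mem_nhdsWithin] with s (hs : 0 < s)
  rw [norm_lt_norm_sub_iff, inner_sub_left, real_inner_smul_left, real_inner_self_eq_norm_sq]
  nlinarith

end InnerProductSpace

lemma exists_smul_mem_bplane_iff {n : ℕ} {v lam : Euc n} (hlam : lam ≠ 0) :
    (∃ t : ℝ, 0 < t ∧ t < 1 ∧ t • v ∈ Bplane lam) ↔ ‖v - lam‖ < ‖v‖ := by
  have hlam2 : 0 < ‖lam‖ ^ 2 := by positivity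
  simp only [Bplane, Set.mem_ofPred_eq, norm_eq_norm_sub_iff, real_inner_smul_left,
    norm_sub_lt_norm_iff]
  constructor
  · rintro ⟨t, ht0, ht1, ht⟩
    nlinarith
  · intro h
    have hinner : 0 < ⟪v, lam⟫ := by linarith
    exact ⟨‖lam‖ ^ 2 / (2 * ⟪v, lam⟫), by positivity, (div_lt_one (by positivity)).mpr h,
      by field_simp⟩

lemma IsFullLattice.zero_mem {n : ℕ} {Λ : Set (Euc n)} (hΛ : IsFullLattice Λ) :
    (0 : Euc n) ∈ Λ := by
  obtain ⟨b, rfl⟩ := hΛ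
  exact ⟨0, by simp⟩

lemma IsFullLattice.finite_inter {n : ℕ} {Λ : Set (Euc n)} (hΛ : IsFullLattice Λ)
    {s : Set (Euc n)} (hs : Bornology.IsBounded s) : (s ∩ Λ).Finite := by
  obtain ⟨b, rfl⟩ := hΛ
  convert ZSpan.setFinite_inter b hs using 2
  ext x
  simp [Submodule.mem_span_range_iff_exists_fun, ← Int.cast_smul_eq_zsmul ℝ, eq_comm]

def nearPoints {n : ℕ} (Λ : Set (Euc n)) (w : Euc n) : Set (Euc n) :=
  {lam | lam ∈ Λ ∧ ‖w - lam‖ ≤ ‖w‖}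

lemma mem_brillouin_iff {n : ℕ} {Λ : Set (Euc n)} {k : ℕ} {w : Euc n} :
    w ∈ brillouin Λ k ↔ (nearPoints Λ w).ncard = k :=
  Iff.rfl

lemma iota_eq_ncard {n : ℕ} (Λ : Set (Euc n)) (v : Euc n) :
    iota Λ v = {lam | lam ∈ Λ ∧ lam ≠ 0 ∧ ‖v - lam‖ < ‖v‖}.ncard := by
  unfold iota
  congr 1
  ext lam
  exact and_congr_right fun _ => and_congr_right exists_smul_mem_bplane_iff

section LocallyFinite

variable {n : ℕ} {Λ : Set (Euc n)}

lemma nearPoints_subset_closedBall (w : Euc n) :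
    nearPoints Λ w ⊆ Metric.closedBall 0 (2 * ‖w‖) ∩ Λ := by
  rintro lam ⟨hlam, hnear⟩
  refine ⟨?_, hlam⟩
  rw [mem_closedBall_zero_iff]
  calc ‖lam‖ ≤ ‖w‖ + ‖w - lam‖ := by simpa using norm_sub_le w (w - lam)
    _ ≤ 2 * ‖w‖ := by linarith

lemma finite_nearPoints (hΛ : ∀ r : ℝ, (Metric.closedBall 0 r ∩ Λ).Finite) (w : Euc n) :
    (nearPoints Λ w).Finite :=
  (hΛ _).subset (nearPoints_subset_closedBall w)

lemma ncard_nearPoints (hΛ : ∀ r : ℝ, (Metric.closedBall 0 r ∩ Λ).Finite)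
    (h0 : (0 : Euc n) ∈ Λ) (w : Euc n) :
    (nearPoints Λ w).ncard = iota Λ w + mu Λ w + 1 := by
  set A := {lam | lam ∈ Λ ∧ lam ≠ 0 ∧ ‖w - lam‖ < ‖w‖}
  set M := {lam | lam ∈ Λ ∧ lam ≠ 0 ∧ ‖w - lam‖ = ‖w‖}
  have hsplit : nearPoints Λ w = insert 0 (A ∪ M) := by
    ext lam
    rcases eq_or_ne lam 0 with rfl | hne
    · simp [nearPoints, h0]
    · simp [nearPoints, A, M, hne, le_iff_lt_or_eq, and_or_left]
  have hA : A.Finite := (finite_nearPoints hΛ w).subset fun lam h => ⟨h.1, h.2.2.le⟩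
  have hM : M.Finite := (finite_nearPoints hΛ w).subset fun lam h => ⟨h.1, h.2.2.le⟩
  have hdisj : Disjoint A M := Set.disjoint_left.mpr fun lam hA hM => hA.2.2.ne hM.2.2
  have h0AM : (0 : Euc n) ∉ A ∪ M := by rintro (⟨-, h, -⟩ | ⟨-, h, -⟩) <;> exact h rfl
  rw [hsplit, Set.ncard_insert_of_notMem h0AM (hA.union hM), Set.ncard_union_eq hdisj hA hM,
    iota_eq_ncard, mu]

lemma eventually_nearPoints_subset (hΛ : ∀ r : ℝ, (Metric.closedBall 0 r ∩ Λ).Finite)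
    (v : Euc n) :
    ∀ᶠ w in 𝓝 v, nearPoints Λ w ⊆ nearPoints Λ v := by
  have hF := hΛ (2 * ‖v‖ + 2)
  have hfar : ∀ᶠ w in 𝓝 v, nearPoints Λ w ⊆ Metric.closedBall 0 (2 * ‖v‖ + 2) ∩ Λ := by
    filter_upwards [Metric.ball_mem_nhds v one_pos] with w hw
    refine (nearPoints_subset_closedBall w).trans (Set.inter_subset_inter_left _ ?_)
    refine Metric.closedBall_subset_closedBall ?_
    have := norm_le_norm_add_norm_sub' w v
    rw [Metric.mem_ball, dist_eq_norm] at hw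
    linarith
  have hnear : ∀ᶠ w in 𝓝 v, ∀ lam ∈ Metric.closedBall 0 (2 * ‖v‖ + 2) ∩ Λ,
      lam ∈ nearPoints Λ w → lam ∈ nearPoints Λ v := by
    refine (eventually_all_finite hF).mpr fun lam hlam => ?_
    by_cases hv : lam ∈ nearPoints Λ v
    · exact Eventually.of_forall fun _ _ => hv
    · have hlt : ‖v‖ < ‖v - lam‖ := lt_of_not_ge fun h => hv ⟨hlam.2, h⟩
      have hopen := isOpen_lt continuous_norm (continuous_sub_right lam).norm
      filter_upwards [hopen.mem_nhds hlt] with w (hw : ‖w‖ < ‖w - lam‖) hmem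
      exact absurd hmem.2 hw.not_ge
  filter_upwards [hfar, hnear] with w hfar hnear lam hlam
  exact hnear lam (hfar hlam) hlam

lemma eventually_nearPoints_eq (hΛ : ∀ r : ℝ, (Metric.closedBall 0 r ∩ Λ).Finite)
    {v : Euc n} (hμ : mu Λ v = 0) :
    ∀ᶠ w in 𝓝 v, nearPoints Λ w = nearPoints Λ v := by
  have hnoTie : ∀ lam ∈ nearPoints Λ v, lam ≠ 0 → ‖v - lam‖ < ‖v‖ := by
    have hM : {lam | lam ∈ Λ ∧ lam ≠ 0 ∧ ‖v - lam‖ = ‖v‖} = ∅ :=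
      (Set.ncard_eq_zero ((finite_nearPoints hΛ v).subset fun lam h => ⟨h.1, h.2.2.le⟩)).mp hμ
    intro lam hlam hne
    refine hlam.2.lt_of_ne fun htie => ?_
    exact (Set.eq_empty_iff_forall_notMem.mp hM) lam ⟨hlam.1, hne, htie⟩
  have hstay : ∀ᶠ w in 𝓝 v, ∀ lam ∈ nearPoints Λ v, lam ≠ 0 → ‖w - lam‖ < ‖w‖ := by
    refine (eventually_all_finite (finite_nearPoints hΛ v)).mpr fun lam hlam => ?_
    by_cases hne : lam = 0
    · exact Eventually.of_forall fun _ h => absurd hne h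
    · have hopen := isOpen_lt (continuous_sub_right lam).norm continuous_norm
      filter_upwards [hopen.mem_nhds (hnoTie lam hlam hne)] with w hw _ using hw
  filter_upwards [eventually_nearPoints_subset hΛ v, hstay] with w hsub hstay
  refine hsub.antisymm fun lam hlam => ⟨hlam.1, ?_⟩
  rcases eq_or_ne lam 0 with rfl | hne
  · simp
  · exact (hstay lam hlam hne).le

lemma frequently_ncard_nearPoints_lt (hΛ : ∀ r : ℝ, (Metric.closedBall 0 r ∩ Λ).Finite)
    {v : Euc n} (hμ : mu Λ v ≠ 0) :
    ∃ᶠ w in 𝓝 v, (nearPoints Λ w).ncard < (nearPoints Λ v).ncard := by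
  obtain ⟨lam, hlam, hne, htie⟩ := Set.nonempty_of_ncard_ne_zero hμ
  refine ((frequently_norm_lt_norm_sub hne htie).and_eventually
    (eventually_nearPoints_subset hΛ v)).mono fun w ⟨hw, hsub⟩ => ?_
  refine Set.ncard_lt_ncard ((Set.ssubset_iff_of_subset hsub).mpr ⟨lam, ⟨hlam, htie.le⟩, ?_⟩)
    (finite_nearPoints hΛ v)
  exact fun h => h.2.not_gt hw

end LocallyFinite

/-- A point `v` lies in the interior of the Brillouin set `B_k(Λ)` if and only if
`ι(v) = k − 1` and `μ(v) = 0`. -/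
theorem mem_interior_brillouin_iff {n : ℕ} (Λ : Set (Euc n)) (hΛ : IsFullLattice Λ)
    (k : ℕ) (hk : 1 ≤ k) (v : Euc n) :
    v ∈ interior (brillouin Λ k) ↔ iota Λ v = k - 1 ∧ mu Λ v = 0 := by
  have hfin : ∀ r : ℝ, (Metric.closedBall 0 r ∩ Λ).Finite := fun r =>
    hΛ.finite_inter Metric.isBounded_closedBall
  have hcount := ncard_nearPoints hfin hΛ.zero_mem
  rw [mem_interior_iff_mem_nhds]
  constructor
  · intro hv
    have hvk : (nearPoints Λ v).ncard = k := mem_brillouin_iff.mp (mem_of_mem_nhds hv)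
    have hμ : mu Λ v = 0 := by
      by_contra hμ
      obtain ⟨w, hwk, hlt⟩ := (Filter.eventually_mem_set.mpr hv).and_frequently
        (frequently_ncard_nearPoints_lt hfin hμ) |>.exists
      rw [mem_brillouin_iff] at hwk
      omega
    have := hcount v
    omega
  · rintro ⟨hι, hμ⟩
    filter_upwards [eventually_nearPoints_eq hfin hμ] with w hw
    rw [mem_brillouin_iff, hw, hcount, hι, hμ]
    omega
end
end

section
/- Let n ≥ 2, let Λ, Λ̃ ⊆ ℝⁿ be full-rank lattices, and let φ : ℝⁿ → ℝⁿ be a focal equivalence between Λ and Λ̃ (a homeomorphism with φ(0) = 0 and φ(σ_i(Λ)) = σ_i(Λ̃) for all i ≥ 1). Suppose λ_1, …, λ_n ∈ Λ \ {0} are linearly independent and λ̃_1, …, λ̃_n ∈ Λ̃ \ {0} satisfy φ(V_{λ_s}) = V_{λ̃_s} for each s. Then λ̃_1, …, λ̃_n are linearly independent. -/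
open Set

noncomputable section

/-! For linearly independent `λ₁, …, λₙ` the Brillouin hyperplanes
`V_{λ_s} = {v : ⟪v, λ_s⟫ = ‖λ_s‖² / 2}` meet in exactly one point. Conversely, if such
hyperplanes meet in exactly one point, their normals span `ℝⁿ`, since a vector orthogonal to all
of them would translate the intersection into itself; so `n` of them are independent. The
bijection `φ` carries `⋂ V_{λ_s}` onto `⋂ V_{λ̃_s}`, which is therefore a single point as well. -/

open Module
open scoped RealInnerProductSpace

section InnerSystem

variable {E ι : Type*} [NormedAddCommGroup E] [InnerProductSpace ℝ E]

theorem Module.Basis.exists_setOf_forall_inner_eq_eq_singleton [FiniteDimensional ℝ E]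
    (b : Basis ι ℝ E) (c : ι → ℝ) : ∃ v, {w : E | ∀ i, ⟪w, b i⟫ = c i} = {v} := by
  refine ⟨(InnerProductSpace.toDual ℝ E).symm (LinearMap.toContinuousLinearMap (b.constr ℝ c)),
    Set.eq_singleton_iff_unique_mem.mpr ⟨fun i => ?_, fun w hw => ?_⟩⟩
  · simp [InnerProductSpace.toDual_symm_apply]
  · exact InnerProductSpace.ext_inner_right_basis b fun i => by
      simp [hw i, InnerProductSpace.toDual_symm_apply]

theorem span_range_eq_top_of_setOf_forall_inner_eq_eq_singleton [FiniteDimensional ℝ E]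
    {b : ι → E} {c : ι → ℝ} {v : E} (h : {w : E | ∀ i, ⟪w, b i⟫ = c i} = {v}) :
    Submodule.span ℝ (Set.range b) = ⊤ := by
  rw [← Submodule.orthogonal_eq_bot_iff, Submodule.eq_bot_iff]
  intro u hu
  have hv : v ∈ {w : E | ∀ i, ⟪w, b i⟫ = c i} := h ▸ rfl
  have hvu : v + u ∈ {w : E | ∀ i, ⟪w, b i⟫ = c i} := fun i => by
    rw [inner_add_left, (Submodule.mem_orthogonal' _ u).mp hu _ (Submodule.subset_span ⟨i, rfl⟩),
      add_zero, hv i]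
  rw [h] at hvu
  simpa using hvu

end InnerSystem

theorem mem_Bplane_iff {n : ℕ} {lam v : Euc n} : v ∈ Bplane lam ↔ ⟪v, lam⟫ = ‖lam‖ ^ 2 / 2 := by
  rw [Bplane, Set.mem_ofPred_eq, ← sq_eq_sq₀ (norm_nonneg _) (norm_nonneg _), norm_sub_sq_real]
  constructor <;> intro h <;> linarith

theorem iInter_Bplane_eq {n : ℕ} {ι : Type*} (lams : ι → Euc n) :
    ⋂ s, Bplane (lams s) = {v | ∀ s, ⟪v, lams s⟫ = ‖lams s‖ ^ 2 / 2} := by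
  ext v
  simp only [Set.mem_iInter, mem_Bplane_iff, Set.mem_ofPred_eq]

theorem exists_iInter_Bplane_eq_singleton {n : ℕ} {lams : Fin n → Euc n}
    (hind : LinearIndependent ℝ lams) : ∃ v, ⋂ s, Bplane (lams s) = {v} := by
  have hcard : Fintype.card (Fin n) = finrank ℝ (Euc n) := by simp
  rw [iInter_Bplane_eq]
  let b := basisOfLinearIndependentOfCardEqFinrank' lams hind hcard
  simpa [b] using b.exists_setOf_forall_inner_eq_eq_singleton fun s => ‖lams s‖ ^ 2 / 2

theorem linearIndependent_of_iInter_Bplane_eq_singleton {n : ℕ} {lams : Fin n → Euc n}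
    {v : Euc n} (h : ⋂ s, Bplane (lams s) = {v}) : LinearIndependent ℝ lams := by
  rw [iInter_Bplane_eq] at h
  exact linearIndependent_of_top_le_span_of_card_eq_finrank
    (span_range_eq_top_of_setOf_forall_inner_eq_eq_singleton h).ge (by simp)

theorem focal_equiv_preserves_independence_general {n : ℕ}
    (φ : Euc n ≃ₜ Euc n)
    (lams lams' : Fin n → Euc n)
    (hind : LinearIndependent ℝ lams)
    (him : ∀ s, φ '' Bplane (lams s) = Bplane (lams' s)) :
    LinearIndependent ℝ lams' := by
  obtain ⟨v, hv⟩ := exists_iInter_Bplane_eq_singleton hind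
  apply linearIndependent_of_iInter_Bplane_eq_singleton (v := φ v)
  rw [← Set.image_singleton, ← hv, Set.image_iInter φ.bijective]
  simp only [him]

/-- A focal equivalence preserves linear independence of lattice vectors determining
Brillouin hyperplanes: if `φ(V_{λ_s}) = V_{λ'_s}` for each `s` and `λ_1, …, λ_n` are
linearly independent, then so are `λ'_1, …, λ'_n`. -/
theorem focal_equiv_preserves_independence {n : ℕ} (hn : 2 ≤ n)
    (Λ Λ' : Set (Euc n)) (hΛ : IsFullLattice Λ) (hΛ' : IsFullLattice Λ')
    (φ : Euc n ≃ₜ Euc n) (hφ0 : φ 0 = 0)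
    (hφ : ∀ i : ℕ, 1 ≤ i → φ '' focalComp Λ i = focalComp Λ' i)
    (lams lams' : Fin n → Euc n)
    (hmem : ∀ s, lams s ∈ Λ ∧ lams s ≠ 0)
    (hmem' : ∀ s, lams' s ∈ Λ' ∧ lams' s ≠ 0)
    (hind : LinearIndependent ℝ lams)
    (him : ∀ s, φ '' Bplane (lams s) = Bplane (lams' s)) :
    LinearIndependent ℝ lams' :=
  focal_equiv_preserves_independence_general φ lams lams' hind him
end
end
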